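/- arXiv:2105.12508 — 3 statements merged into one kernel-verified Lean document; each statement's English description precedes it below -/
import Mathlib

section
/- Let k = ⌊ε₁/ε∞⌋ and α = ε₁/ε∞ − k, and suppose k + 1 ≤ d. The point v ∈ ℝ^d with k coordinates equal to ε∞, one coordinate equal to α·ε∞, and the remaining coordinates zero, satisfies ‖v‖₁ = ε₁, ‖v‖∞ ≤ ε∞, and for any p ∈ (1,∞) with conjugate q, ‖v‖_p = ε∞ · (k + α^p)^(1/p) and the linear functional w ↦ ⟨w, v⟩ with w having k coordinates equal to 1, one coordinate α^(q−1) (matching v's coordinates) and the rest 0 attains ⟨w, v⟩ = ε∞·(k + α^q) = the maximum of ⟨w, x⟩ over x ∈ C = conv(B₁(ε₁) ∪ B∞(ε∞)) provided ε∞·(k + α^q) ≥ max(ε₁·‖w‖∞, ε∞·‖w‖₁). -/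
noncomputable def norm1 {d : ℕ} (x : Fin d → ℝ) : ℝ := ∑ i, |x i|
noncomputable def normInf {d : ℕ} (x : Fin d → ℝ) : ℝ := ⨆ i, |x i|
noncomputable def normp {d : ℕ} (p : ℝ) (x : Fin d → ℝ) : ℝ := (∑ i, |x i| ^ p) ^ (1 / p)

noncomputable def B1 (d : ℕ) (ε : ℝ) : Set (Fin d → ℝ) := {x | norm1 x ≤ ε}
noncomputable def Binf (d : ℕ) (ε : ℝ) : Set (Fin d → ℝ) := {x | normInf x ≤ ε}

lemma sum_aux {d k : ℕ} (hkd : k + 1 ≤ d) (a b : ℝ) :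
    ∑ i : Fin d, (if (i : ℕ) < k then a else if (i : ℕ) = k then b else 0)
      = k * a + b := by
  rw [Fin.sum_univ_eq_sum_range (fun i => if i < k then a else if i = k then b else 0) d]
  rw [← Finset.sum_subset (Finset.range_subset_range.2 hkd)
      (fun i hi hni => by
        simp only [Finset.mem_range] at hi hni
        have h1 : ¬ i < k := by omega
        have h2 : ¬ i = k := by omega
        simp [h1, h2])]
  rw [Finset.sum_range_succ]
  have : ∑ i ∈ Finset.range k, (if i < k then a else if i = k then b else 0)
      = ∑ i ∈ Finset.range k, a :=
    Finset.sum_congr rfl (fun i hi => by simp only [Finset.mem_range] at hi; simp [hi])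
  rw [this, Finset.sum_const, Finset.card_range, nsmul_eq_mul]
  simp

/-- With `k = ⌊ε₁/ε∞⌋`, `α = ε₁/ε∞ - k` and `k + 1 ≤ d`, the point `v` with `k`
coordinates `ε∞`, one coordinate `α·ε∞` and the rest zero has `‖v‖₁ = ε₁`,
`‖v‖∞ ≤ ε∞`, `‖v‖_p = ε∞·(k + α^p)^(1/p)`; the matching dual vector `w` satisfies
`⟨w,v⟩ = ε∞·(k + α^q)`, which is the maximum of `⟨w,·⟩` over `C` provided
`ε∞·(k + α^q) ≥ max(ε₁‖w‖∞, ε∞‖w‖₁)`. -/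
theorem stmt7 (d : ℕ) (ε1 εinf p q : ℝ) (hεinf : 0 < εinf) (h1 : εinf < ε1)
    (h2 : ε1 < d * εinf) (hp1 : 1 < p) (hpq : 1 / p + 1 / q = 1)
    (k : ℕ) (hkdef : (k : ℝ) = ⌊ε1 / εinf⌋₊) (hkd : k + 1 ≤ d) :
    let α : ℝ := ε1 / εinf - k
    let v : Fin d → ℝ := fun i => if (i : ℕ) < k then εinf else if (i : ℕ) = k then α * εinf else 0
    let w : Fin d → ℝ := fun i => if (i : ℕ) < k then 1 else if (i : ℕ) = k then α ^ (q - 1) else 0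
    norm1 v = ε1 ∧
    normInf v ≤ εinf ∧
    normp p v = εinf * ((k : ℝ) + α ^ p) ^ (1 / p) ∧
    (∑ i, w i * v i) = εinf * ((k : ℝ) + α ^ q) ∧
    (max (ε1 * normInf w) (εinf * norm1 w) ≤ εinf * ((k : ℝ) + α ^ q) →
      IsGreatest {r : ℝ | ∃ x ∈ convexHull ℝ (B1 d ε1 ∪ Binf d εinf), r = ∑ i, w i * x i}
        (εinf * ((k : ℝ) + α ^ q))) := by
  intro α v w
  have hd0 : 0 < d := by omega
  haveI : Nonempty (Fin d) := ⟨⟨0, hd0⟩⟩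
  have hp0 : 0 < p := by linarith
  have hxpos : 0 < ε1 / εinf := div_pos (by linarith) hεinf
  have hα0 : 0 ≤ α := by
    have := Nat.floor_le hxpos.le
    show 0 ≤ ε1 / εinf - k
    rw [hkdef]; linarith
  have hα1 : α < 1 := by
    have := Nat.lt_floor_add_one (ε1 / εinf)
    show ε1 / εinf - k < 1
    rw [hkdef]; linarith
  have hε1eq : ε1 = εinf * (k + α) := by
    have : ε1 / εinf = k + α := by show ε1/εinf = (k:ℝ) + (ε1/εinf - k); ring
    field_simp at this; linarith
  -- q facts
  have h1p : 1 / p < 1 := (div_lt_one hp0).mpr hp1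
  have h1ppos : 0 < 1 / p := by positivity
  have hqinv : 1 / q = 1 - 1 / p := by linarith
  have hqinvpos : 0 < 1 / q := by rw [hqinv]; linarith
  have hq0 : 0 < q := one_div_pos.mp hqinvpos
  have hq1 : 1 < q := (div_lt_one hq0).mp (by rw [hqinv]; linarith)
  have hαq : α ^ (q - 1) * α = α ^ q := by
    rcases eq_or_lt_of_le hα0 with h | h
    · rw [← h, Real.zero_rpow (by linarith : q - 1 ≠ 0), Real.zero_rpow (by linarith : q ≠ 0)]
      ring
    · calc α ^ (q - 1) * α = α ^ (q - 1) * α ^ (1 : ℝ) := by rw [Real.rpow_one]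
        _ = α ^ (q - 1 + 1) := (Real.rpow_add h _ _).symm
        _ = α ^ q := by ring_nf
  -- v nonneg
  have hvnn : ∀ i, 0 ≤ v i := by
    intro i; simp only [v]; split_ifs
    · exact hεinf.le
    · positivity
    · exact le_refl 0
  -- Conjunct 1
  have hc1 : norm1 v = ε1 := by
    have : norm1 v = ∑ i, v i := Finset.sum_congr rfl (fun i _ => abs_of_nonneg (hvnn i))
    rw [this]
    show (∑ i : Fin d, (if (i:ℕ) < k then εinf else if (i:ℕ) = k then α * εinf else 0)) = ε1
    rw [sum_aux hkd, hε1eq]; ring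
  -- Conjunct 2
  have hc2 : normInf v ≤ εinf := by
    apply ciSup_le
    intro i
    simp only [v]
    split_ifs
    · rw [abs_of_pos hεinf]
    · rw [abs_of_nonneg (by positivity)]; nlinarith
    · simpa using hεinf.le
  -- Conjunct 3
  have hc3 : normp p v = εinf * ((k : ℝ) + α ^ p) ^ (1 / p) := by
    have hsum : ∑ i, |v i| ^ p = εinf ^ p * ((k : ℝ) + α ^ p) := by
      have : ∀ i : Fin d, |v i| ^ p =
          (if (i:ℕ) < k then εinf ^ p else if (i:ℕ) = k then α ^ p * εinf ^ p else 0) := by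
        intro i
        simp only [v]
        split_ifs
        · rw [abs_of_pos hεinf]
        · rw [abs_of_nonneg (by positivity), Real.mul_rpow hα0 hεinf.le]
        · rw [abs_zero, Real.zero_rpow (by linarith : p ≠ 0)]
      rw [Finset.sum_congr rfl (fun i _ => this i), sum_aux hkd]
      ring
    rw [normp, hsum, Real.mul_rpow (by positivity) (by positivity),
      ← Real.rpow_mul hεinf.le, mul_one_div_cancel (by linarith : p ≠ 0), Real.rpow_one]
  -- Conjunct 4
  have hc4 : (∑ i, w i * v i) = εinf * ((k : ℝ) + α ^ q) := by
    have : ∀ i : Fin d, w i * v i =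
        (if (i:ℕ) < k then εinf else if (i:ℕ) = k then α ^ (q-1) * (α * εinf) else 0) := by
      intro i
      simp only [v, w]
      split_ifs <;> ring
    rw [Finset.sum_congr rfl (fun i _ => this i), sum_aux hkd,
      show α ^ (q-1) * (α * εinf) = (α ^ (q-1) * α) * εinf by ring, hαq]
    ring
  refine ⟨hc1, hc2, hc3, hc4, ?_⟩
  intro hmax
  set M := εinf * ((k : ℝ) + α ^ q) with hM
  constructor
  · exact ⟨v, subset_convexHull ℝ _ (Or.inl (by show norm1 v ≤ ε1; rw [hc1])), hc4.symm⟩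
  · rintro r ⟨x, hx, rfl⟩
    have hwInf : ∀ i, |w i| ≤ normInf w :=
      fun i => le_ciSup (f := fun j => |w j|) (Set.Finite.bddAbove (Set.finite_range _)) i
    have hInfnn : 0 ≤ normInf w := le_trans (abs_nonneg _) (hwInf ⟨0, hd0⟩)
    have key : convexHull ℝ (B1 d ε1 ∪ Binf d εinf) ⊆ {y | ∑ i, w i * y i ≤ M} := by
      apply convexHull_min
      · rintro y (hy | hy)
        · have hy' : norm1 y ≤ ε1 := hy
          calc ∑ i, w i * y i ≤ ∑ i, normInf w * |y i| := by
                refine Finset.sum_le_sum (fun i _ => ?_)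
                calc w i * y i ≤ |w i * y i| := le_abs_self _
                  _ = |w i| * |y i| := abs_mul _ _
                  _ ≤ normInf w * |y i| :=
                      mul_le_mul_of_nonneg_right (hwInf i) (abs_nonneg _)
            _ = normInf w * norm1 y := by rw [norm1, ← Finset.mul_sum]
            _ ≤ normInf w * ε1 := mul_le_mul_of_nonneg_left hy' hInfnn
            _ = ε1 * normInf w := mul_comm _ _
            _ ≤ M := le_trans (le_max_left _ _) hmax
        · have hy' : ∀ i, |y i| ≤ εinf :=
            fun i => le_trans (le_ciSup (f := fun j => |y j|) (Set.Finite.bddAbove (Set.finite_range _)) i) hy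
          calc ∑ i, w i * y i ≤ ∑ i, |w i| * εinf := by
                refine Finset.sum_le_sum (fun i _ => ?_)
                calc w i * y i ≤ |w i * y i| := le_abs_self _
                  _ = |w i| * |y i| := abs_mul _ _
                  _ ≤ |w i| * εinf := mul_le_mul_of_nonneg_left (hy' i) (abs_nonneg _)
            _ = norm1 w * εinf := by rw [norm1, ← Finset.sum_mul]
            _ = εinf * norm1 w := mul_comm _ _
            _ ≤ M := le_trans (le_max_right _ _) hmax
      · have hlin : IsLinearMap ℝ (fun y : Fin d → ℝ => ∑ i, w i * y i) := by
          constructor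
          · intro a b
            simp only [Pi.add_apply, mul_add]
            exact Finset.sum_add_distrib
          · intro c a
            simp only [Pi.smul_apply, smul_eq_mul, Finset.mul_sum]
            exact Finset.sum_congr rfl (fun i _ => by ring)
        exact convex_halfSpace_le hlin M
    exact key hx
end

section
/- Suppose an affine classifier f(x) = ⟨w, x⟩ + b with f(x₀) > 0 satisfies sign(f(x₀ + δ)) = sign(f(x₀)) for all δ with ‖δ‖₁ ≤ ε₁ and for all δ with ‖δ‖∞ ≤ ε∞. Then for every p ∈ [1, ∞] and every δ with ‖δ‖_p ≤ ρ_p := min_{z ∉ conv(B₁(ε₁) ∪ B∞(ε∞))} ‖z‖_p, we have sign(f(x₀ + δ)) = sign(f(x₀)); i.e., the affine classifier is robust at x₀ in the l_p-ball of radius ρ_p. -/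
lemma normp_nonneg {d : ℕ} (p : ℝ) (x : Fin d → ℝ) : 0 ≤ normp p x :=
  Real.rpow_nonneg (Finset.sum_nonneg fun i _ => Real.rpow_nonneg (abs_nonneg _) _) _

lemma normp_smul {d : ℕ} {p : ℝ} (hp : 1 ≤ p) {t : ℝ} (ht : 0 ≤ t) (x : Fin d → ℝ) :
    normp p (t • x) = t * normp p x := by
  have hp0 : p ≠ 0 := by linarith
  have hS : 0 ≤ ∑ i, |x i| ^ p :=
    Finset.sum_nonneg fun i _ => Real.rpow_nonneg (abs_nonneg _) _
  have h1 : ∀ i : Fin d, |(t • x) i| ^ p = t ^ p * |x i| ^ p := by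
    intro i
    rw [Pi.smul_apply, smul_eq_mul, abs_mul, abs_of_nonneg ht,
      Real.mul_rpow ht (abs_nonneg _)]
  unfold normp
  rw [Finset.sum_congr rfl fun i _ => h1 i, ← Finset.mul_sum,
    Real.mul_rpow (Real.rpow_nonneg ht _) hS, ← Real.rpow_mul ht,
    mul_one_div_cancel hp0, Real.rpow_one]

lemma normp_eq_zero {d : ℕ} {p : ℝ} (hp : 1 ≤ p) {x : Fin d → ℝ}
    (h : normp p x = 0) : x = 0 := by
  have hp0 : p ≠ 0 := by linarith
  have hS : 0 ≤ ∑ i, |x i| ^ p :=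
    Finset.sum_nonneg fun i _ => Real.rpow_nonneg (abs_nonneg _) _
  have h2 : (∑ i, |x i| ^ p) = 0 := by
    have := (Real.rpow_eq_zero_iff_of_nonneg hS).1 h
    exact this.1
  have h3 := (Finset.sum_eq_zero_iff_of_nonneg
    (fun i _ => Real.rpow_nonneg (abs_nonneg (x i)) p)).1 h2
  funext i
  have := h3 i (Finset.mem_univ i)
  have := (Real.rpow_eq_zero_iff_of_nonneg (abs_nonneg (x i))).1 this
  simpa [abs_eq_zero] using this.1

lemma normInf_nonneg {d : ℕ} (hd : 1 ≤ d) (x : Fin d → ℝ) : 0 ≤ normInf x := by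
  have i0 : Fin d := ⟨0, hd⟩
  exact le_trans (abs_nonneg (x i0))
    (le_ciSup (f := fun i => |x i|) (Set.Finite.bddAbove (Set.finite_range _)) i0)

lemma normInf_smul {d : ℕ} (hd : 1 ≤ d) {t : ℝ} (ht : 0 ≤ t) (x : Fin d → ℝ) :
    normInf (t • x) = t * normInf x := by
  unfold normInf
  rw [Real.mul_iSup_of_nonneg ht]
  congr 1
  funext i
  rw [Pi.smul_apply, smul_eq_mul, abs_mul, abs_of_nonneg ht]

lemma normInf_eq_zero {d : ℕ} (hd : 1 ≤ d) {x : Fin d → ℝ}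
    (h : normInf x = 0) : x = 0 := by
  funext i
  have h1 : |x i| ≤ normInf x :=
    le_ciSup (f := fun i => |x i|) (Set.Finite.bddAbove (Set.finite_range _)) i
  rw [h] at h1
  have := abs_nonneg (x i)
  simpa [abs_eq_zero] using le_antisymm h1 this

lemma key_mem_closure {d : ℕ} (C : Set (Fin d → ℝ)) (h0C : (0 : Fin d → ℝ) ∈ C)
    (N : (Fin d → ℝ) → ℝ) (hN0 : ∀ x, 0 ≤ N x)
    (hNh : ∀ t : ℝ, 0 ≤ t → ∀ x, N (t • x) = t * N x)
    (hNz : ∀ x, N x = 0 → x = 0)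
    (δ : Fin d → ℝ)
    (hδ : N δ ≤ sInf {r : ℝ | ∃ z, z ∉ C ∧ r = N z}) :
    δ ∈ closure C := by
  have hbdd : BddBelow {r : ℝ | ∃ z, z ∉ C ∧ r = N z} :=
    ⟨0, fun r ⟨z, _, hz⟩ => hz ▸ hN0 z⟩
  have hmem : ∀ t : ℝ, t ∈ Set.Ico (0 : ℝ) 1 → t • δ ∈ C := by
    intro t ht
    by_contra htC
    have h1 : sInf {r : ℝ | ∃ z, z ∉ C ∧ r = N z} ≤ N (t • δ) :=
      csInf_le hbdd ⟨t • δ, htC, rfl⟩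
    rw [hNh t ht.1 δ] at h1
    have h2 : N δ ≤ t * N δ := le_trans hδ h1
    have h3 : (1 - t) * N δ ≤ 0 := by linarith
    have h4 : N δ = 0 := by
      nlinarith [hN0 δ, ht.2]
    have h5 : δ = 0 := hNz δ h4
    rw [h5, smul_zero] at htC
    exact htC h0C
  have htend : Filter.Tendsto (fun n : ℕ => ((1 : ℝ) - 1/(n+1)) • δ)
      Filter.atTop (nhds δ) := by
    have h1 : Filter.Tendsto (fun n : ℕ => (1 : ℝ) - 1/(n+1)) Filter.atTop (nhds 1) := by
      simpa using ((tendsto_const_nhds : Filter.Tendsto (fun _ : ℕ => (1 : ℝ)) Filter.atTop (nhds 1)).sub (tendsto_one_div_add_atTop_nhds_zero_nat : Filter.Tendsto (fun n : ℕ => (1 : ℝ) / ((n : ℝ) + 1)) Filter.atTop (nhds 0)))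
    simpa using h1.smul_const δ
  refine mem_closure_of_tendsto htend (Filter.Eventually.of_forall fun n => ?_)
  apply hmem
  constructor
  · have h2 : (1 : ℝ)/(n+1) ≤ 1 := by
      rw [div_le_one (by positivity)]
      linarith [Nat.cast_nonneg (α := ℝ) n]
    linarith
  · have h2 : (0 : ℝ) < 1/(n+1) := by positivity
    linarith


lemma real_self_mul_sign (r : ℝ) : r * Real.sign r = |r| := by
  rcases lt_trichotomy r 0 with h | h | h
  · rw [Real.sign_of_neg h, abs_of_neg h]; ring
  · simp [h]
  · rw [Real.sign_of_pos h, abs_of_pos h]; ring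

lemma abs_sign_le_one (r : ℝ) : |Real.sign r| ≤ 1 := by
  rcases Real.sign_apply_eq r with h | h | h <;> rw [h] <;> norm_num

lemma pos_of_sign_eq {a c : ℝ} (hc : 0 < c) (h : Real.sign a = Real.sign c) : 0 < a := by
  rw [Real.sign_of_pos hc] at h
  rcases lt_trichotomy a 0 with h1 | h1 | h1
  · rw [Real.sign_of_neg h1] at h; norm_num at h
  · rw [h1, Real.sign_zero] at h; norm_num at h
  · exact h1

/-- If an affine classifier `f(x) = ⟨w,x⟩ + b` with `f(x₀) > 0` keeps the sign of
`f(x₀)` on `x₀ + B₁(ε₁)` and on `x₀ + B∞(ε∞)`, then for every `p ∈ [1,∞]` it keeps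
the sign on the `l_p`-ball of radius `ρ_p = min_{z ∉ C} ‖z‖_p`, where `C` is the
convex hull of `B₁(ε₁) ∪ B∞(ε∞)` (the case `p = ∞` is stated via `‖·‖∞`). -/
theorem stmt14 (d : ℕ) (hd : 1 ≤ d) (ε1 εinf : ℝ) (hε1 : 0 < ε1) (hεinf : 0 < εinf)
    (w : Fin d → ℝ) (b : ℝ) (x0 : Fin d → ℝ)
    (f : (Fin d → ℝ) → ℝ) (hf : ∀ x, f x = (∑ i, w i * x i) + b)
    (h0 : 0 < f x0)
    (hB1 : ∀ δ : Fin d → ℝ, norm1 δ ≤ ε1 → Real.sign (f (x0 + δ)) = Real.sign (f x0))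
    (hBinf : ∀ δ : Fin d → ℝ, normInf δ ≤ εinf → Real.sign (f (x0 + δ)) = Real.sign (f x0)) :
    (∀ p : ℝ, 1 ≤ p → ∀ δ : Fin d → ℝ,
      normp p δ ≤
        sInf {r : ℝ | ∃ z : Fin d → ℝ,
          z ∉ convexHull ℝ (B1 d ε1 ∪ Binf d εinf) ∧ r = normp p z} →
      Real.sign (f (x0 + δ)) = Real.sign (f x0)) ∧
    (∀ δ : Fin d → ℝ,
      normInf δ ≤
        sInf {r : ℝ | ∃ z : Fin d → ℝ,
          z ∉ convexHull ℝ (B1 d ε1 ∪ Binf d εinf) ∧ r = normInf z} →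
      Real.sign (f (x0 + δ)) = Real.sign (f x0)) := by
  have i0 : Fin d := ⟨0, hd⟩
  have hne : Nonempty (Fin d) := ⟨i0⟩
  set C : Set (Fin d → ℝ) := convexHull ℝ (B1 d ε1 ∪ Binf d εinf) with hC
  set g : (Fin d → ℝ) → ℝ := fun δ => ∑ i, w i * δ i with hg
  -- affine decomposition
  have hfx : ∀ δ : Fin d → ℝ, f (x0 + δ) = f x0 + g δ := by
    intro δ
    simp only [hf, hg, Pi.add_apply, mul_add, Finset.sum_add_distrib]
    ring
  -- linearity of g
  have hglin : IsLinearMap ℝ g := by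
    constructor
    · intro x y
      simp only [hg, Pi.add_apply, mul_add, Finset.sum_add_distrib]
    · intro c x
      simp only [hg, Pi.smul_apply, smul_eq_mul, Finset.mul_sum]
      congr 1; funext i; ring
  -- constants
  set M : ℝ := Finset.univ.sup' (Finset.univ_nonempty) (fun i => |w i|) with hM
  set T : ℝ := ∑ i, |w i| with hT
  have hM0 : 0 ≤ M := le_trans (abs_nonneg (w i0))
    (Finset.le_sup' (f := fun i => |w i|) (Finset.mem_univ i0))
  -- strict bound 1 : ε1 * M < f x0
  have hK1 : ε1 * M < f x0 := by
    obtain ⟨i1, _, hi1⟩ := Finset.exists_mem_eq_sup' (Finset.univ_nonempty) (fun i => |w i|)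
    set δ1 : Fin d → ℝ := fun j => if j = i1 then -(ε1 * Real.sign (w i1)) else 0 with hδ1
    have hn1 : norm1 δ1 ≤ ε1 := by
      unfold norm1
      have : ∀ j : Fin d, |δ1 j| = if j = i1 then ε1 * |Real.sign (w i1)| else 0 := by
        intro j
        simp only [hδ1]
        split_ifs with h
        · rw [abs_neg, abs_mul, abs_of_pos hε1]
        · exact abs_zero
      rw [Finset.sum_congr rfl fun j _ => this j, Finset.sum_ite_eq' _ i1]
      simp only [Finset.mem_univ, if_true]
      calc ε1 * |Real.sign (w i1)| ≤ ε1 * 1 :=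
            mul_le_mul_of_nonneg_left (abs_sign_le_one _) hε1.le
        _ = ε1 := mul_one _
    have hgδ1 : g δ1 = -(ε1 * |w i1|) := by
      simp only [hg, hδ1, mul_ite, mul_zero, Finset.sum_ite_eq' _ i1, Finset.mem_univ, if_true]
      have := real_self_mul_sign (w i1)
      ring_nf
      nlinarith [real_self_mul_sign (w i1)]
    have hpos := pos_of_sign_eq h0 (hB1 δ1 hn1)
    rw [hfx δ1, hgδ1] at hpos
    rw [hM, hi1]
    linarith
  -- strict bound 2 : εinf * T < f x0
  have hK2 : εinf * T < f x0 := by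
    set δ2 : Fin d → ℝ := fun i => -(εinf * Real.sign (w i)) with hδ2
    have hn2 : normInf δ2 ≤ εinf := by
      unfold normInf
      apply ciSup_le
      intro i
      simp only [hδ2, abs_neg, abs_mul, abs_of_pos hεinf]
      calc εinf * |Real.sign (w i)| ≤ εinf * 1 :=
            mul_le_mul_of_nonneg_left (abs_sign_le_one _) hεinf.le
        _ = εinf := mul_one _
    have hgδ2 : g δ2 = -(εinf * T) := by
      simp only [hg, hδ2, hT, Finset.mul_sum, ← Finset.sum_neg_distrib]
      apply Finset.sum_congr rfl
      intro i _
      have := real_self_mul_sign (w i)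
      nlinarith [real_self_mul_sign (w i)]
    have hpos := pos_of_sign_eq h0 (hBinf δ2 hn2)
    rw [hfx δ2, hgδ2] at hpos
    linarith
  set K : ℝ := max (ε1 * M) (εinf * T) with hK
  have hKlt : K < f x0 := max_lt hK1 hK2
  -- the closed half-space
  set H : Set (Fin d → ℝ) := {x | -K ≤ g x} with hH
  have hHconv : Convex ℝ H := convex_halfSpace_ge hglin (-K)
  have hHclosed : IsClosed H := by
    have : Continuous g := by
      apply continuous_finset_sum
      intro i _
      exact continuous_const.mul (continuous_apply i)
    exact isClosed_le continuous_const this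
  have hUH : B1 d ε1 ∪ Binf d εinf ⊆ H := by
    rintro a (ha | ha)
    · have h1 : |g a| ≤ ε1 * M := by
        calc |g a| ≤ ∑ i, |w i * a i| := Finset.abs_sum_le_sum_abs _ _
          _ = ∑ i, |w i| * |a i| := by simp [abs_mul]
          _ ≤ ∑ i, M * |a i| := by
              apply Finset.sum_le_sum
              intro i _
              exact mul_le_mul_of_nonneg_right
                (Finset.le_sup' (f := fun i => |w i|) (Finset.mem_univ i)) (abs_nonneg _)
          _ = M * norm1 a := by rw [norm1, Finset.mul_sum]
          _ ≤ M * ε1 := mul_le_mul_of_nonneg_left ha hM0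
          _ = ε1 * M := mul_comm _ _
      have h2 : -K ≤ g a := by
        have := neg_abs_le (g a)
        have h3 : ε1 * M ≤ K := le_max_left _ _
        linarith
      exact h2
    · have hai : ∀ i, |a i| ≤ εinf := fun i =>
        le_trans (le_ciSup (f := fun i => |a i|)
          (Set.Finite.bddAbove (Set.finite_range _)) i) ha
      have h1 : |g a| ≤ εinf * T := by
        calc |g a| ≤ ∑ i, |w i * a i| := Finset.abs_sum_le_sum_abs _ _
          _ = ∑ i, |w i| * |a i| := by simp [abs_mul]
          _ ≤ ∑ i, |w i| * εinf := by
              apply Finset.sum_le_sum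
              intro i _
              exact mul_le_mul_of_nonneg_left (hai i) (abs_nonneg _)
          _ = εinf * T := by rw [hT, Finset.mul_sum]; apply Finset.sum_congr rfl; intros; ring
      have h3 : εinf * T ≤ K := le_max_right _ _
      have := neg_abs_le (g a)
      show -K ≤ g a
      linarith
  have hCH : C ⊆ H := convexHull_min hUH hHconv
  have hclCH : closure C ⊆ H := hHclosed.closure_subset_iff.2 hCH
  have h0C : (0 : Fin d → ℝ) ∈ C := by
    apply subset_convexHull
    left
    show norm1 (0 : Fin d → ℝ) ≤ ε1
    simp [norm1, hε1.le]
  -- final step from closure membership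
  have hfin : ∀ δ : Fin d → ℝ, δ ∈ closure C →
      Real.sign (f (x0 + δ)) = Real.sign (f x0) := by
    intro δ hδ
    have hH' := hclCH hδ
    have : 0 < f (x0 + δ) := by
      rw [hfx δ]
      have : -K ≤ g δ := hH'
      linarith
    rw [Real.sign_of_pos this, Real.sign_of_pos h0]
  constructor
  · intro p hp δ hδ
    apply hfin
    exact key_mem_closure C h0C (normp p) (normp_nonneg p)
      (fun t ht x => normp_smul hp ht x) (fun x hx => normp_eq_zero hp hx) δ hδ
  · intro δ hδ
    apply hfin
    exact key_mem_closure C h0C normInf (normInf_nonneg hd)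
      (fun t ht x => normInf_smul hd ht x) (fun x hx => normInf_eq_zero hd hx) δ hδ
end

section
/- For x ∈ ℝ^d and ε∞ > 0, if ‖x‖∞ > ε∞ and ‖x‖₁ > ε₁, and p ∈ (1,∞), then ‖x‖_p^p ≥ ε∞^p + (ε₁ − ε∞)^p/(d−1)^(p−1) whenever ε∞ < ε₁ < d·ε∞; i.e., any point outside both balls has l_p norm at least the value stated in Proposition 1. -/
open scoped NNReal


/-- Tangent line inequality for `rpow`. -/
lemma tangent_rpow {a b p : ℝ} (ha : 0 ≤ a) (hb : 0 < b) (hp : 1 ≤ p) :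
    b ^ p + p * b ^ (p - 1) * (a - b) ≤ a ^ p := by
  have hs : (-1 : ℝ) ≤ a / b - 1 := by
    have : 0 ≤ a / b := div_nonneg ha hb.le
    linarith
  have hber := one_add_mul_self_le_rpow_one_add hs hp
  have h1 : (1 + (a / b - 1)) = a / b := by ring
  rw [h1] at hber
  have h2 : (a / b) ^ p = a ^ p / b ^ p := Real.div_rpow ha hb.le p
  have hbp : (0 : ℝ) < b ^ p := Real.rpow_pos_of_pos hb p
  have h3 : b ^ (p - 1) = b ^ p / b := Real.rpow_sub_one hb.ne' p
  have h4 : b ^ p * (1 + p * (a / b - 1)) ≤ b ^ p * (a ^ p / b ^ p) := by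
    rw [← h2]; exact mul_le_mul_of_nonneg_left hber hbp.le
  have h5 : b ^ p * (a ^ p / b ^ p) = a ^ p := by field_simp
  rw [h5] at h4
  calc b ^ p + p * b ^ (p - 1) * (a - b)
      = b ^ p * (1 + p * (a / b - 1)) := by rw [h3]; field_simp
    _ ≤ a ^ p := h4

/-- Superadditivity of `rpow` for exponents `≥ 1`. -/
lemma add_rpow_le_rpow_add' {a b p : ℝ} (ha : 0 ≤ a) (hb : 0 ≤ b) (hp : 1 ≤ p) :
    a ^ p + b ^ p ≤ (a + b) ^ p := by
  have h := NNReal.add_rpow_le_rpow_add a.toNNReal b.toNNReal hp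
  have h' : ((a.toNNReal ^ p + b.toNNReal ^ p : ℝ≥0) : ℝ)
      ≤ (((a.toNNReal + b.toNNReal) ^ p : ℝ≥0) : ℝ) := by exact_mod_cast h
  simpa [NNReal.coe_rpow, Real.coe_toNNReal a ha, Real.coe_toNNReal b hb] using h'

/-- Power mean inequality over a finset. -/
lemma pow_mean_le {ι : Type*} (s : Finset ι) (hs : s.Nonempty) (f : ι → ℝ)
    (hf : ∀ i ∈ s, 0 ≤ f i) {p : ℝ} (hp : 1 ≤ p) :
    (∑ i ∈ s, f i) ^ p / (s.card : ℝ) ^ (p - 1) ≤ ∑ i ∈ s, f i ^ p := by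
  have hn : (0 : ℝ) < s.card := by exact_mod_cast Finset.card_pos.mpr hs
  have hw : ∀ i ∈ s, (0 : ℝ) ≤ 1 / s.card := fun i _ => by positivity
  have hw' : ∑ _i ∈ s, (1 : ℝ) / s.card = 1 := by
    rw [Finset.sum_const, nsmul_eq_mul]; field_simp
  have h := Real.rpow_arith_mean_le_arith_mean_rpow s (fun _ => 1 / s.card) f hw hw' hf hp
  have hS : (0 : ℝ) ≤ ∑ i ∈ s, f i := Finset.sum_nonneg hf
  have hL : (∑ i ∈ s, (1 / (s.card : ℝ)) * f i) = (1 / s.card) * ∑ i ∈ s, f i := by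
    rw [Finset.mul_sum]
  have hR : (∑ i ∈ s, (1 / (s.card : ℝ)) * f i ^ p) = (1 / s.card) * ∑ i ∈ s, f i ^ p := by
    rw [Finset.mul_sum]
  rw [hL, hR] at h
  have hmul : ((1 : ℝ) / s.card * ∑ i ∈ s, f i) ^ p
      = (1 / (s.card : ℝ)) ^ p * (∑ i ∈ s, f i) ^ p :=
    Real.mul_rpow (by positivity) hS
  rw [hmul] at h
  have hcp : (0 : ℝ) < (s.card : ℝ) ^ p := Real.rpow_pos_of_pos hn p
  have hinv : (1 / (s.card : ℝ)) ^ p = 1 / (s.card : ℝ) ^ p := by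
    rw [Real.div_rpow zero_le_one hn.le, Real.one_rpow]
  rw [hinv] at h
  have hsub : (s.card : ℝ) ^ (p - 1) = (s.card : ℝ) ^ p / s.card :=
    Real.rpow_sub_one hn.ne' p
  have h2 : (∑ i ∈ s, f i) ^ p ≤ (s.card : ℝ) ^ p / s.card * ∑ i ∈ s, f i ^ p := by
    calc (∑ i ∈ s, f i) ^ p
        = (s.card : ℝ) ^ p * (1 / (s.card : ℝ) ^ p * (∑ i ∈ s, f i) ^ p) := by field_simp
      _ ≤ (s.card : ℝ) ^ p * (1 / (s.card : ℝ) * ∑ i ∈ s, f i ^ p) :=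
          mul_le_mul_of_nonneg_left h hcp.le
      _ = (s.card : ℝ) ^ p / s.card * ∑ i ∈ s, f i ^ p := by ring
  rw [hsub, div_le_iff₀ (by positivity)]
  linarith [h2, mul_comm ((∑ i ∈ s, f i ^ p)) ((s.card : ℝ) ^ p / s.card)]

/-- Lower-bound direction of Proposition 1: any point outside both `B₁(ε₁)` and
`B∞(ε∞)` satisfies `‖x‖_p^p ≥ ε∞^p + (ε₁-ε∞)^p/(d-1)^(p-1)`. -/
theorem stmt17 (d : ℕ) (hd : 2 ≤ d) (ε1 εinf p : ℝ) (hεinf : 0 < εinf)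
    (h1 : εinf < ε1) (h2 : ε1 < d * εinf) (hp : 1 < p)
    (x : Fin d → ℝ) (hx1 : ε1 < norm1 x) (hxinf : εinf < normInf x) :
    εinf ^ p + (ε1 - εinf) ^ p / ((d : ℝ) - 1) ^ (p - 1) ≤ ∑ i, |x i| ^ p := by
  have hdpos : (0 : ℕ) < d := by omega
  haveI : Nonempty (Fin d) := ⟨⟨0, hdpos⟩⟩
  obtain ⟨i₀, hi₀⟩ := Finite.exists_max (fun i => |x i|)
  set m := |x i₀| with hm
  have hminf : εinf < m := lt_of_lt_of_le hxinf (ciSup_le hi₀)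
  have hm0 : 0 < m := hεinf.trans hminf
  -- the complementary coordinates
  set s : Finset (Fin d) := Finset.univ.erase i₀ with hsdef
  have hcard : s.card = d - 1 := by
    rw [hsdef, Finset.card_erase_of_mem (Finset.mem_univ _), Finset.card_univ, Fintype.card_fin]
  have hcardR : (s.card : ℝ) = (d : ℝ) - 1 := by
    rw [hcard]; have : 1 ≤ d := by omega
    push_cast [Nat.cast_sub this]; ring
  have hsne : s.Nonempty := by
    rw [← Finset.card_pos, hcard]; omega
  have hd1 : (1 : ℝ) ≤ (d : ℝ) - 1 := by
    have : (2 : ℝ) ≤ (d : ℝ) := by exact_mod_cast hd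
    linarith
  set C : ℝ := ((d : ℝ) - 1) ^ (p - 1) with hC
  have hCpos : 0 < C := Real.rpow_pos_of_pos (by linarith) _
  have hC1 : 1 ≤ C := Real.one_le_rpow hd1 (by linarith)
  set S : ℝ := ∑ i ∈ s, |x i| with hSdef
  have hS0 : 0 ≤ S := Finset.sum_nonneg fun i _ => abs_nonneg _
  have hsplit : norm1 x = m + S := by
    rw [norm1, hSdef, hsdef, ← Finset.add_sum_erase _ _ (Finset.mem_univ i₀)]
  have hSge : ε1 - m < S := by rw [hsplit] at hx1; linarith
  have hsplitp : ∑ i, |x i| ^ p = m ^ p + ∑ i ∈ s, |x i| ^ p := by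
    rw [hsdef, ← Finset.add_sum_erase _ _ (Finset.mem_univ i₀)]
  have hpm : S ^ p / C ≤ ∑ i ∈ s, |x i| ^ p := by
    have := pow_mean_le s hsne (fun i => |x i|) (fun i _ => abs_nonneg _) hp.le
    rwa [hcardR] at this
  have hsum_ge : m ^ p + S ^ p / C ≤ ∑ i, |x i| ^ p := by
    rw [hsplitp]; linarith
  rcases le_or_gt ε1 m with hcase | hcase
  · -- m ≥ ε1 : already m^p suffices
    have hb : εinf ^ p + (ε1 - εinf) ^ p ≤ ε1 ^ p := by
      have := add_rpow_le_rpow_add' hεinf.le (by linarith : (0:ℝ) ≤ ε1 - εinf) hp.le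
      simpa using this
    have hdiv : (ε1 - εinf) ^ p / C ≤ (ε1 - εinf) ^ p := by
      have hnn : 0 ≤ (ε1 - εinf) ^ p := Real.rpow_nonneg (by linarith) _
      calc (ε1 - εinf) ^ p / C ≤ (ε1 - εinf) ^ p / 1 :=
            div_le_div_of_nonneg_left hnn one_pos hC1 |>.trans_eq rfl
        _ = (ε1 - εinf) ^ p := div_one _
    have hmp : ε1 ^ p ≤ m ^ p := Real.rpow_le_rpow (by linarith) hcase (by linarith)
    have hrest : 0 ≤ S ^ p / C := by positivity
    linarith
  · -- m < ε1 : use tangent lines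
    have hε1m : 0 < ε1 - m := by linarith
    have hSp : (ε1 - m) ^ p ≤ S ^ p := Real.rpow_le_rpow hε1m.le hSge.le (by linarith)
    have hSpC : (ε1 - m) ^ p / C ≤ S ^ p / C := by gcongr
    -- tangent at εinf for m^p
    have ht1 : εinf ^ p + p * εinf ^ (p - 1) * (m - εinf) ≤ m ^ p :=
      tangent_rpow hm0.le hεinf hp.le
    -- tangent at ε1 - εinf for (ε1 - m)^p
    have ht2 : (ε1 - εinf) ^ p + p * (ε1 - εinf) ^ (p - 1) * ((ε1 - m) - (ε1 - εinf))
        ≤ (ε1 - m) ^ p := tangent_rpow hε1m.le (by linarith) hp.le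
    -- key comparison of slopes
    have hkey : (ε1 - εinf) ^ (p - 1) ≤ C * εinf ^ (p - 1) := by
      have hmulr : C * εinf ^ (p - 1) = (((d : ℝ) - 1) * εinf) ^ (p - 1) :=
        (Real.mul_rpow (by linarith) hεinf.le).symm
      rw [hmulr]
      exact Real.rpow_le_rpow (by linarith) (by push_cast; nlinarith) (by linarith)
    have ht : 0 ≤ m - εinf := by linarith
    have hppos : 0 < p := by linarith
    -- combine
    have hslope : p * (ε1 - εinf) ^ (p - 1) * (m - εinf) / C
        ≤ p * εinf ^ (p - 1) * (m - εinf) := by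
      rw [div_le_iff₀ hCpos]
      have h1' : p * (ε1 - εinf) ^ (p - 1) * (m - εinf)
          ≤ p * (C * εinf ^ (p - 1)) * (m - εinf) := by
        apply mul_le_mul_of_nonneg_right _ ht
        exact mul_le_mul_of_nonneg_left hkey hppos.le
      nlinarith
    have ht2' : (ε1 - εinf) ^ p - p * (ε1 - εinf) ^ (p - 1) * (m - εinf) ≤ (ε1 - m) ^ p := by
      linarith [ht2]
    have ht2C : ((ε1 - εinf) ^ p - p * (ε1 - εinf) ^ (p - 1) * (m - εinf)) / C
        ≤ (ε1 - m) ^ p / C := by gcongr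
    have hsplit2 : ((ε1 - εinf) ^ p - p * (ε1 - εinf) ^ (p - 1) * (m - εinf)) / C
        = (ε1 - εinf) ^ p / C - p * (ε1 - εinf) ^ (p - 1) * (m - εinf) / C := by ring
    rw [hsplit2] at ht2C
    linarith
end
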